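/- Let θ_1,…,θ_n ∈ (0,π/2) with ∑_{i=1}^n θ_i = π. Then for all positive integers α, k with k ≥ 2, (∑_{i=1}^n csc θ_i)^{2α} − (n csc(π/n))^α (∑_{i=1}^n csc θ_i)^α ≤ (∑_{i=1}^n csc θ_i)^{kα} − (n csc(π/n))^{kα}, with equality if and only if θ_1 = ⋯ = θ_n = π/n. -/

import Mathlib

/-!
The cosecant is strictly convex on `(0, π)`, being the reciprocal of the positive, strictly
concave sine. Jensen's inequality therefore gives `c ≤ S` for `S = ∑ csc θᵢ` and
`c = n csc (π / n)`, with equality exactly when all `θᵢ = π / n`; moreover `c ≥ 1`.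
Putting `b = c ^ α ≤ s = S ^ α`, the claim becomes `s² - b s ≤ sᵏ - bᵏ`, which for `b < s` holds
strictly since `sᵏ - bᵏ = sᵏ⁻¹ (s - b) + b (sᵏ⁻¹ - bᵏ⁻¹)` and `sᵏ⁻¹ ≥ s`.
-/

open Real Set Finset

section Convexity

variable {𝕜 E : Type*} [Field 𝕜] [LinearOrder 𝕜] [IsStrictOrderedRing 𝕜]
  [AddCommGroup E] [Module 𝕜 E] {s : Set E} {f : E → 𝕜}

theorem StrictConcaveOn.inv (hf : StrictConcaveOn 𝕜 s f) (hpos : ∀ x ∈ s, 0 < f x) :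
    StrictConvexOn 𝕜 s fun x ↦ (f x)⁻¹ := by
  refine ⟨hf.1, fun x hx y hy hxy a b ha hb hab ↦ ?_⟩
  have hfx := hpos x hx
  have hfy := hpos y hy
  simp only [smul_eq_mul] at *
  calc (f (a • x + b • y))⁻¹ < (a * f x + b * f y)⁻¹ :=
        inv_strictAnti₀ (by positivity) (by simpa using hf.2 hx hy hxy ha hb hab)
    _ ≤ a * (f x)⁻¹ + b * (f y)⁻¹ := by
        simpa using (convexOn_zpow (-1)).2 (mem_Ioi.2 hfx) (mem_Ioi.2 hfy) ha.le hb.le hab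

variable {ι : Type*} [Fintype ι] [Nonempty ι] {p : ι → E}

theorem Convex.inv_card_smul_sum_mem (hs : Convex 𝕜 s) (hp : ∀ i, p i ∈ s) :
    (Fintype.card ι : 𝕜)⁻¹ • ∑ i, p i ∈ s := by
  simpa [Finset.centerMass] using hs.centerMass_mem (t := univ) (w := fun _ ↦ (1 : 𝕜))
    (by simp) (by simp [Fintype.card_pos]) (fun i _ ↦ hp i)

theorem ConvexOn.card_mul_map_mean_le (hf : ConvexOn 𝕜 s f) (hp : ∀ i, p i ∈ s) :
    (Fintype.card ι : 𝕜) * f ((Fintype.card ι : 𝕜)⁻¹ • ∑ i, p i) ≤ ∑ i, f (p i) := by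
  have hcard : (0 : 𝕜) < Fintype.card ι := by simp [Fintype.card_pos]
  have hjensen := hf.map_sum_le (t := univ) (w := fun _ ↦ (Fintype.card ι : 𝕜)⁻¹) (p := p)
    (fun _ _ ↦ by positivity) (by simp) (fun i _ ↦ hp i)
  rw [← smul_sum, ← smul_sum, smul_eq_mul] at hjensen
  rwa [← le_inv_mul_iff₀ hcard]

theorem StrictConvexOn.card_mul_map_mean_eq_sum_iff (hf : StrictConvexOn 𝕜 s f)
    (hp : ∀ i, p i ∈ s) :
    (Fintype.card ι : 𝕜) * f ((Fintype.card ι : 𝕜)⁻¹ • ∑ i, p i) = ∑ i, f (p i) ↔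
      ∀ i, p i = (Fintype.card ι : 𝕜)⁻¹ • ∑ i, p i := by
  have hcard : (0 : 𝕜) < Fintype.card ι := by simp [Fintype.card_pos]
  have hjensen := hf.map_sum_eq_iff (t := univ) (w := fun _ ↦ (Fintype.card ι : 𝕜)⁻¹) (p := p)
    (fun _ _ ↦ by positivity) (by simp) (fun i _ ↦ hp i)
  rw [← smul_sum, ← smul_sum, smul_eq_mul, ← mul_right_inj' hcard.ne',
    mul_inv_cancel_left₀ hcard.ne'] at hjensen
  simpa using hjensen

end Convexity

theorem strictConvexOn_inv_sin : StrictConvexOn ℝ (Ioo 0 π) fun x ↦ (sin x)⁻¹ :=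
  (strictConcaveOn_sin_Icc.subset Ioo_subset_Icc_self (convex_Ioo 0 π)).inv
    fun _ hx ↦ sin_pos_of_pos_of_lt_pi hx.1 hx.2

theorem sq_sub_mul_lt_pow_sub_pow {R : Type*} [CommRing R] [LinearOrder R] [IsStrictOrderedRing R]
    {b s : R} (hb : 0 < b) (hbs : b < s) (hs : 1 ≤ s) {k : ℕ} (hk : 2 ≤ k) :
    s ^ 2 - b * s < s ^ k - b ^ k := by
  obtain ⟨j, rfl⟩ : ∃ j, k = j + 2 := ⟨k - 2, by omega⟩
  calc s ^ 2 - b * s = s * (s - b) := by ring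
    _ ≤ s ^ (j + 1) * (s - b) :=
        mul_le_mul_of_nonneg_right (le_self_pow₀ hs (by omega)) (sub_nonneg.2 hbs.le)
    _ < s ^ (j + 1) * (s - b) + b * (s ^ (j + 1) - b ^ (j + 1)) :=
        lt_add_of_pos_right _ (mul_pos hb (sub_pos.2 (pow_lt_pow_left₀ hbs hb.le (by omega))))
    _ = s ^ (j + 2) - b ^ (j + 2) := by ring

open Real in
theorem stmt9_general (n : ℕ)
    (θ : Fin n → ℝ) (hθ : ∀ i, θ i ∈ Set.Ioo (0:ℝ) (π / 2))
    (hsum : ∑ i, θ i = π) (α k : ℕ) (hα : 0 < α) (hk : 2 ≤ k) :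
    (∑ i, 1 / sin (θ i)) ^ (2 * α)
        - ((n : ℝ) * (1 / sin (π / n))) ^ α * (∑ i, 1 / sin (θ i)) ^ α
      ≤ (∑ i, 1 / sin (θ i)) ^ (k * α) - ((n : ℝ) * (1 / sin (π / n))) ^ (k * α)
    ∧ ((∑ i, 1 / sin (θ i)) ^ (2 * α)
          - ((n : ℝ) * (1 / sin (π / n))) ^ α * (∑ i, 1 / sin (θ i)) ^ α
        = (∑ i, 1 / sin (θ i)) ^ (k * α) - ((n : ℝ) * (1 / sin (π / n))) ^ (k * α)
      ↔ ∀ i, θ i = π / n) := by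
  have hn0 : 0 < n := Nat.pos_of_ne_zero fun h ↦ by
    subst h
    simp only [univ_eq_empty, sum_empty] at hsum
    exact pi_ne_zero hsum.symm
  have : Nonempty (Fin n) := ⟨⟨0, hn0⟩⟩
  have hθπ : ∀ i, θ i ∈ Ioo 0 π := fun i ↦ ⟨(hθ i).1, (hθ i).2.trans (half_lt_self pi_pos)⟩
  have hmean : (Fintype.card (Fin n) : ℝ)⁻¹ • ∑ i, θ i = π / n := by
    rw [Fintype.card_fin, hsum, smul_eq_mul, inv_mul_eq_div]
  have hjensen := strictConvexOn_inv_sin.convexOn.card_mul_map_mean_le hθπ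
  have hjensen_eq := strictConvexOn_inv_sin.card_mul_map_mean_eq_sum_iff hθπ
  have hπn : π / n ∈ Ioo 0 π := hmean ▸ (convex_Ioo (0 : ℝ) π).inv_card_smul_sum_mem hθπ
  rw [hmean, Fintype.card_fin] at hjensen hjensen_eq
  simp only [one_div]
  set c := (n : ℝ) * (sin (π / n))⁻¹
  have hc : 1 ≤ c := one_le_mul_of_one_le_of_one_le (by exact_mod_cast hn0)
    (one_le_inv₀ (sin_pos_of_pos_of_lt_pi hπn.1 hπn.2) |>.2 (sin_le_one _))
  rw [pow_mul', pow_mul', pow_mul']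
  rcases hjensen.lt_or_eq with hlt | heq
  · have hstrict := sq_sub_mul_lt_pow_sub_pow (by positivity)
      (pow_lt_pow_left₀ hlt (by positivity) hα.ne') (one_le_pow₀ (hc.trans hjensen)) hk
    exact ⟨hstrict.le, iff_of_false hstrict.ne fun h ↦ hlt.ne (hjensen_eq.2 h)⟩
  · rw [← heq]
    exact ⟨(by ring : _ = _).le, iff_of_true (by ring) (hjensen_eq.1 heq)⟩

open Real in
theorem stmt9 (n : ℕ) (hn : 3 ≤ n)
    (θ : Fin n → ℝ) (hθ : ∀ i, θ i ∈ Set.Ioo (0:ℝ) (π / 2))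
    (hsum : ∑ i, θ i = π) (α k : ℕ) (hα : 0 < α) (hk : 2 ≤ k) :
    (∑ i, 1 / sin (θ i)) ^ (2 * α)
        - ((n : ℝ) * (1 / sin (π / n))) ^ α * (∑ i, 1 / sin (θ i)) ^ α
      ≤ (∑ i, 1 / sin (θ i)) ^ (k * α) - ((n : ℝ) * (1 / sin (π / n))) ^ (k * α)
    ∧ ((∑ i, 1 / sin (θ i)) ^ (2 * α)
          - ((n : ℝ) * (1 / sin (π / n))) ^ α * (∑ i, 1 / sin (θ i)) ^ α
        = (∑ i, 1 / sin (θ i)) ^ (k * α) - ((n : ℝ) * (1 / sin (π / n))) ^ (k * α)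
      ↔ ∀ i, θ i = π / n) :=
  stmt9_general n θ hθ hsum α k hα hk
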